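/- For a multivariate normal random vector X with positive definite covariance Σ and concentration matrix K = Σ⁻¹, distinct coordinates X_v and X_w are conditionally independent given all remaining coordinates if and only if K_{vw} = 0. -/
import Mathlib


/-- `g` depends only on the coordinates in `S`. -/
def DependsOnlyOn {V : Type*} (S : Set V) (g : (V → ℝ) → ℝ) : Prop :=
  ∀ x y : V → ℝ, (∀ u ∈ S, x u = y u) → g x = g y

/-- For a centered multivariate normal vector with positive definite covariance
`Σ` and concentration matrix `K = Σ⁻¹`, distinct coordinates `X_v` and `X_w`
are conditionally independent given all remaining coordinates (i.e., the
Gaussian density `exp(-½ xᵀKx)` splits into a factor not involving `x_w` times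
a factor not involving `x_v`) if and only if `K v w = 0`. -/
theorem gaussian_pairwise_ci_iff_concentration_zero
    {V : Type*} [Fintype V] [DecidableEq V]
    (S : Matrix V V ℝ) (hS : S.PosDef) (K : Matrix V V ℝ) (hK : K = S⁻¹)
    (v w : V) (hvw : v ≠ w) :
    (∃ h k : (V → ℝ) → ℝ,
        DependsOnlyOn ({w}ᶜ : Set V) h ∧ DependsOnlyOn ({v}ᶜ : Set V) k ∧
        ∀ x : V → ℝ,
          Real.exp (-(1 / 2) * ∑ a, ∑ b, x a * K a b * x b) = h x * k x)
      ↔ K v w = 0 := by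
  have Ksym : K w v = K v w := by
    subst hK
    simpa using (hS.isHermitian.inv.apply v w)
  set Q : (V → ℝ) → ℝ := fun x => ∑ a, ∑ b, x a * K a b * x b with hQ
  constructor
  · rintro ⟨h, k, hh, hk, hfac⟩
    -- evaluate at indicator-type vectors
    set xv : V → ℝ := fun u => if u = v then 1 else 0 with hxv
    set xw : V → ℝ := fun u => if u = w then 1 else 0 with hxw
    set x1 : V → ℝ := fun u => (if u = v then 1 else 0) + (if u = w then 1 else 0) with hx1
    have Qv : Q xv = K v v := by
      simp [hQ, hxv, ite_mul, mul_ite, Finset.sum_ite_eq']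
    have Qw : Q xw = K w w := by
      simp [hQ, hxw, ite_mul, mul_ite, Finset.sum_ite_eq']
    have Q0 : Q (0 : V → ℝ) = 0 := by simp [hQ]
    have Q1 : Q x1 = K v v + K v w + (K w v + K w w) := by
      simp [hQ, hx1, add_mul, mul_add, ite_mul, mul_ite, Finset.sum_add_distrib,
        Finset.sum_ite_eq']
      ring
    -- h ignores coordinate w, k ignores coordinate v
    have hx1v : h x1 = h xv := by
      apply hh
      intro u hu
      have : u ≠ w := by simpa using hu
      simp [hx1, hxv, this]
    have kx1w : k x1 = k xw := by
      apply hk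
      intro u hu
      have : u ≠ v := by simpa using hu
      simp [hx1, hxw, this]
    have kxv0 : k xv = k (0 : V → ℝ) := by
      apply hk
      intro u hu
      have : u ≠ v := by simpa using hu
      simp [hxv, this]
    have hxw0 : h xw = h (0 : V → ℝ) := by
      apply hh
      intro u hu
      have : u ≠ w := by simpa using hu
      simp [hxw, this]
    have key : Real.exp (-(1 / 2) * Q x1 + -(1 / 2) * Q (0 : V → ℝ))
        = Real.exp (-(1 / 2) * Q xv + -(1 / 2) * Q xw) := by
      rw [Real.exp_add, Real.exp_add, hfac, hfac, hfac, hfac, hx1v, kx1w, kxv0, hxw0]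
      ring
    have := Real.exp_eq_exp.mp key
    rw [Q1, Q0, Qv, Qw] at this
    have : K v w + K w v = 0 := by linarith
    rw [Ksym] at this
    linarith
  · intro hKvw
    have hKwv : K w v = 0 := by rw [Ksym, hKvw]
    classical
    set E := (Finset.univ : Finset V).erase w with hE
    refine ⟨fun x => Real.exp (-(1 / 2) * ∑ a ∈ E, ∑ b ∈ E, x a * K a b * x b),
      fun x => Real.exp (-(1 / 2) * ((∑ b, x w * K w b * x b) + ∑ a ∈ E, x a * K a w * x w)),
      ?_, ?_, ?_⟩
    · intro x y hxy
      have : (∑ a ∈ E, ∑ b ∈ E, x a * K a b * x b)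
          = ∑ a ∈ E, ∑ b ∈ E, y a * K a b * y b := by
        apply Finset.sum_congr rfl
        intro a ha
        have haw : a ≠ w := Finset.ne_of_mem_erase ha
        apply Finset.sum_congr rfl
        intro b hb
        have hbw : b ≠ w := Finset.ne_of_mem_erase hb
        rw [hxy a (by simpa using haw), hxy b (by simpa using hbw)]
      simp only [this]
    · intro x y hxy
      have hwv : x w = y w := hxy w (by simpa using (Ne.symm hvw))
      have e1 : (∑ b, x w * K w b * x b) = ∑ b, y w * K w b * y b := by
        apply Finset.sum_congr rfl
        intro b _
        by_cases hb : b = v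
        · subst hb; rw [hKwv]; ring
        · rw [hwv, hxy b (by simpa using hb)]
      have e2 : (∑ a ∈ E, x a * K a w * x w) = ∑ a ∈ E, y a * K a w * y w := by
        apply Finset.sum_congr rfl
        intro a _
        by_cases ha : a = v
        · subst ha; rw [hKvw]; ring
        · rw [hwv, hxy a (by simpa using ha)]
      simp only [e1, e2]
    · intro x
      rw [← Real.exp_add]
      congr 1
      have hsplit : ∀ f : V → ℝ, ∑ a, f a = f w + ∑ a ∈ E, f a := fun f =>
        (Finset.add_sum_erase _ f (Finset.mem_univ w)).symm
      have key : (∑ a, ∑ b, x a * K a b * x b) = (∑ b, x w * K w b * x b)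
          + ∑ a ∈ E, (x a * K a w * x w + ∑ b ∈ E, x a * K a b * x b) := by
        rw [hsplit (fun a => ∑ b, x a * K a b * x b)]
        congr 1
        apply Finset.sum_congr rfl
        intro a _
        exact hsplit (fun b => x a * K a b * x b)
      rw [key, Finset.sum_add_distrib]
      ring
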